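/- Let X(x,y) = (x − 4y − 1, −4x − y + 4) with first integral H₁(x,y) = 2x² + xy − 4x − 2y² − y, and Y(x,y) = (−x − 4y − 1, 4x + y + 4) with first integral H₂(x,y) = −2x² − xy − 4x − 2y² − y. Set u = (−1/√17, 4/√17) and v = (1/√17, −4/√17). Then: (i) ‖u‖ = ‖v‖ = 1 and u ≠ v; (ii) H₁(u) = H₁(v) and H₂(u) = H₂(v); (iii) X(1,0) = (0,0), i.e., (1,0) is a singularity of X; (iv) H₁(u) = H₁(v) = H₁(1,0) = −2, so u and v lie on the level set of H₁ through the saddle point of X; (v) ⟨X(u), u⟩ · ⟨Y(u), u⟩ > 0 and ⟨X(v), v⟩ · ⟨Y(v), v⟩ > 0, so u and v lie in the crossing region. -/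
import Mathlib


/-- The inner vector field `X(x,y) = (x - 4y - 1, -4x - y + 4)`. -/
def X14 (u : ℝ × ℝ) : ℝ × ℝ := (u.1 - 4 * u.2 - 1, -4 * u.1 - u.2 + 4)

/-- The outer vector field `Y(x,y) = (-x - 4y - 1, 4x + y + 4)`. -/
def Y14 (u : ℝ × ℝ) : ℝ × ℝ := (-u.1 - 4 * u.2 - 1, 4 * u.1 + u.2 + 4)

/-- First integral `H₁(x,y) = 2x² + xy - 4x - 2y² - y` of `X14`. -/
def H14₁ (u : ℝ × ℝ) : ℝ :=
  2 * u.1 ^ 2 + u.1 * u.2 - 4 * u.1 - 2 * u.2 ^ 2 - u.2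

/-- First integral `H₂(x,y) = -2x² - xy - 4x - 2y² - y` of `Y14`. -/
def H14₂ (u : ℝ × ℝ) : ℝ :=
  -2 * u.1 ^ 2 - u.1 * u.2 - 4 * u.1 - 2 * u.2 ^ 2 - u.2

/-- The crossing condition `⟨X(u), u⟩ ⬝ ⟨Y(u), u⟩ > 0` at `u`. -/
def crossing14 (u : ℝ × ℝ) : Prop :=
  ((X14 u).1 * u.1 + (X14 u).2 * u.2) * ((Y14 u).1 * u.1 + (Y14 u).2 * u.2) > 0

/-- The first intersection point `u = (-1/√17, 4/√17)`. -/
noncomputable def u14 : ℝ × ℝ := (-1 / Real.sqrt 17, 4 / Real.sqrt 17)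

/-- The second intersection point `v = (1/√17, -4/√17)`. -/
noncomputable def v14 : ℝ × ℝ := (1 / Real.sqrt 17, -4 / Real.sqrt 17)

/-- Algebraic verification of the homoclinic connection: `u` and `v` are distinct points on
the unit circle solving the closing equations, they lie on the level set of `H₁` through the
saddle singularity `(1,0)` of `X` (level `-2`), and both are in the crossing region. -/
theorem homoclinic_connection_verification :
    (u14.1 ^ 2 + u14.2 ^ 2 = 1 ∧ v14.1 ^ 2 + v14.2 ^ 2 = 1 ∧ u14 ≠ v14) ∧
    (H14₁ u14 = H14₁ v14 ∧ H14₂ u14 = H14₂ v14) ∧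
    X14 (1, 0) = (0, 0) ∧
    (H14₁ u14 = -2 ∧ H14₁ v14 = -2 ∧ H14₁ (1, 0) = -2) ∧
    (crossing14 u14 ∧ crossing14 v14) := by
  have hs2 : Real.sqrt 17 ^ 2 = 17 := Real.sq_sqrt (by norm_num)
  have hs0 : (0:ℝ) < Real.sqrt 17 := Real.sqrt_pos.mpr (by norm_num)
  have hs4 : (4:ℝ) < Real.sqrt 17 := by nlinarith
  set s := Real.sqrt 17 with hs
  have hne : s ≠ 0 := ne_of_gt hs0
  have ha : ∀ a : ℝ, a / s = a * s / 17 := by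
    intro a
    rw [div_eq_div_iff hne (by norm_num)]
    linear_combination (-a) * hs2
  have hXu : (X14 u14).1 * u14.1 + (X14 u14).2 * u14.2 = 1 + s := by
    simp only [X14, u14, ← hs, ha]
    linear_combination (1/17) * hs2
  have hYu : (Y14 u14).1 * u14.1 + (Y14 u14).2 * u14.2 = 15/17 + s := by
    simp only [Y14, u14, ← hs, ha]
    linear_combination (15/289) * hs2
  have hXv : (X14 v14).1 * v14.1 + (X14 v14).2 * v14.2 = 1 - s := by
    simp only [X14, v14, ← hs, ha]
    linear_combination (1/17) * hs2
  have hYv : (Y14 v14).1 * v14.1 + (Y14 v14).2 * v14.2 = 15/17 - s := by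
    simp only [Y14, v14, ← hs, ha]
    linear_combination (15/289) * hs2
  refine ⟨⟨?_, ?_, ?_⟩, ⟨?_, ?_⟩, ?_, ⟨?_, ?_, ?_⟩, ?_, ?_⟩
  · simp only [u14, ← hs, ha]; linear_combination (1/17) * hs2
  · simp only [v14, ← hs, ha]; linear_combination (1/17) * hs2
  · intro h
    have h1 : (-1:ℝ)/s = 1/s := congrArg Prod.fst h
    rw [div_eq_div_iff hne hne] at h1
    nlinarith
  · simp only [H14₁, u14, v14, ← hs, ha]; ring
  · simp only [H14₂, u14, v14, ← hs, ha]; ring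
  · norm_num [X14]
  · simp only [H14₁, u14, ← hs, ha]; linear_combination (-2/17) * hs2
  · simp only [H14₁, v14, ← hs, ha]; linear_combination (-2/17) * hs2
  · norm_num [H14₁]
  · unfold crossing14
    rw [hXu, hYu]
    exact mul_pos (by linarith) (by linarith)
  · unfold crossing14
    rw [hXv, hYv]
    exact mul_pos_of_neg_of_neg (by linarith) (by linarith)
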